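/- Let (V, ω) be a finite dimensional symplectic vector space, W₀ ⊆ V a coisotropic subspace, and (W, Φ) a pair where W ⊆ V is a coisotropic subspace and Φ : W₀/W₀^ω → W/W^ω is a linear symplectic isomorphism between the quotients. Then there exists a linear symplectic automorphism Ψ of (V, ω) such that Ψ W₀ = W and the induced map Ψ_{W₀} : W₀/W₀^ω → W/W^ω equals Φ. -/

import Mathlib

/-!
Lift `Φ` to a linear isomorphism `e : W₀ ≃ W` compatible with the quotient maps; this is possible
because both kernels `W₀^ω` and `W^ω` have dimension `dim V - dim W₀ = dim V - dim W`. The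
hypothesis on `Φ` says that `e` is isometric for `ω`. By Witt's extension theorem for alternating
forms, proved by extending an isometric injection from a subspace one vector at a time, `e`
extends to a symplectic automorphism `Ψ` of `V`.
-/

/-- The symplectic complement `W^ω = {v ∈ V | ω(v,w) = 0 for all w ∈ W}`. -/
def symplCompl {V : Type*} [AddCommGroup V] [Module ℝ V]
    (ω : V →ₗ[ℝ] V →ₗ[ℝ] ℝ) (W : Submodule ℝ V) : Submodule ℝ V where
  carrier := {v | ∀ w ∈ W, ω v w = 0}
  add_mem' := by
    intro a b ha hb w hw
    simp [map_add, LinearMap.add_apply, ha w hw, hb w hw]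
  zero_mem' := by
    intro w hw
    simp
  smul_mem' := by
    intro c a ha w hw
    simp [map_smul, LinearMap.smul_apply, ha w hw]

open Module

section Quotient

variable {K E E' : Type*} [Field K] [AddCommGroup E] [Module K E] [AddCommGroup E'] [Module K E']

theorem Submodule.exists_prod_linearEquiv_mkQ (p : Submodule K E) :
    ∃ e : ((E ⧸ p) × p) ≃ₗ[K] E, ∀ z, p.mkQ (e z) = z.1 := by
  obtain ⟨q, hq⟩ := p.exists_isCompl
  refine ⟨((p.quotientEquivOfIsCompl q hq).prodCongr (LinearEquiv.refl K p)).trans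
    (q.prodEquivOfIsCompl p hq.symm), fun z => ?_⟩
  simp

theorem Submodule.exists_linearEquiv_mkQ_eq [FiniteDimensional K E] [FiniteDimensional K E']
    (p : Submodule K E) (q : Submodule K E') (Φ : (E ⧸ p) ≃ₗ[K] (E' ⧸ q))
    (h : finrank K p = finrank K q) :
    ∃ e : E ≃ₗ[K] E', ∀ x, q.mkQ (e x) = Φ (p.mkQ x) := by
  obtain ⟨e₀, he₀⟩ := p.exists_prod_linearEquiv_mkQ
  obtain ⟨e₁, he₁⟩ := q.exists_prod_linearEquiv_mkQ
  obtain ⟨g⟩ := FiniteDimensional.nonempty_linearEquiv_of_finrank_eq h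
  refine ⟨e₀.symm.trans ((Φ.prodCongr g).trans e₁), fun x => ?_⟩
  conv_rhs => rw [← e₀.apply_symm_apply x, he₀]
  exact he₁ _

end Quotient

section Witt

variable {K V E : Type*} [Field K] [AddCommGroup V] [Module K V] [AddCommGroup E] [Module K E]
  {ω : V →ₗ[K] V →ₗ[K] K}

theorem LinearPMap.exists_supSpanSingleton_apply (f : E →ₗ.[K] V) {v : E} (v' : V)
    (hv : v ∉ f.domain) (z : (f.supSpanSingleton v v' hv).domain) :
    ∃ (a : f.domain) (c : K),
      (z : E) = a + c • v ∧ f.supSpanSingleton v v' hv z = f a + c • v' := by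
  obtain ⟨z, hz⟩ := z
  obtain ⟨a, ha, w, hw, rfl⟩ := Submodule.mem_sup.1 hz
  obtain ⟨c, rfl⟩ := Submodule.mem_span_singleton.1 hw
  exact ⟨⟨a, ha⟩, c, rfl, LinearPMap.supSpanSingleton_apply_mk f v v' hv a ha c⟩

theorem LinearPMap.injective_supSpanSingleton {f : E →ₗ.[K] V} (hf : Function.Injective f.toFun)
    {v : E} {v' : V} (hv : v ∉ f.domain) (hv' : v' ∉ LinearMap.range f.toFun) :
    Function.Injective (f.supSpanSingleton v v' hv).toFun := by
  refine (injective_iff_map_eq_zero _).2 fun z hz => ?_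
  obtain ⟨a, c, hza, hfz⟩ := f.exists_supSpanSingleton_apply v' hv z
  rw [LinearPMap.toFun_eq_coe, hfz] at hz
  have hc : c = 0 := by
    by_contra hc
    refine hv' ⟨-c⁻¹ • a, ?_⟩
    rw [f.toFun.map_smul, LinearPMap.toFun_eq_coe, eq_neg_of_add_eq_zero_left hz, smul_neg,
      neg_smul, neg_neg, smul_smul, inv_mul_cancel₀ hc, one_smul]
  rw [hc, zero_smul, add_zero] at hz
  have ha : a = 0 := (injective_iff_map_eq_zero _).1 hf a hz
  exact Subtype.ext (by simp [hza, ha, hc])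

theorem isometric_supSpanSingleton (hω : ω.IsAlt) {f : V →ₗ.[K] V}
    (hiso : ∀ x y : f.domain, ω (f x) (f y) = ω x y) {v v' : V} (hv : v ∉ f.domain)
    (hvv' : ∀ a : f.domain, ω v' (f a) = ω v a) (x y : (f.supSpanSingleton v v' hv).domain) :
    ω (f.supSpanSingleton v v' hv x) (f.supSpanSingleton v v' hv y) = ω x y := by
  obtain ⟨a, c, hxa, hfx⟩ := f.exists_supSpanSingleton_apply v' hv x
  obtain ⟨b, d, hyb, hfy⟩ := f.exists_supSpanSingleton_apply v' hv y
  rw [hfx, hfy, hxa, hyb]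
  simp only [map_add, map_smul, LinearMap.add_apply, LinearMap.smul_apply, smul_eq_mul,
    hω.self_eq_zero, hiso, hvv', ← hω.neg v' (f a), ← hω.neg v (a : V)]

theorem exists_forall_apply_eq_of_injective [FiniteDimensional K V] (hn : ω.Nondegenerate)
    {f : E →ₗ[K] V} (hf : Function.Injective f) (φ : Module.Dual K E) :
    ∃ v', ∀ x, ω v' (f x) = φ x := by
  obtain ⟨g, hg⟩ := f.exists_leftInverse_of_injective (LinearMap.ker_eq_bot.2 hf)
  refine ⟨(LinearMap.BilinForm.toDual ω hn).symm (φ ∘ₗ g), fun x => ?_⟩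
  rw [LinearMap.BilinForm.apply_toDual_symm_apply, LinearMap.comp_apply, ← LinearMap.comp_apply g,
    hg, LinearMap.id_apply]

theorem exists_ne_zero_mem_orthogonal [FiniteDimensional K V] (hn : ω.Nondegenerate)
    {A : Submodule K V} (hA : finrank K A < finrank K V) :
    ∃ v ∈ LinearMap.BilinForm.orthogonal ω A, v ≠ 0 := by
  refine Submodule.exists_mem_ne_zero_of_ne_bot fun h => ?_
  have := LinearMap.BilinForm.finrank_orthogonal hn A
  rw [h, finrank_bot] at this
  omega

section ExtensionPair

variable [FiniteDimensional K V] (hn : ω.Nondegenerate) {A : Submodule K V} {f : A →ₗ[K] V}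
  (hf : Function.Injective f) (hiso : ∀ x y : A, ω (f x) (f y) = ω x y)
include hn hf hiso

theorem exists_extension_pair_of_mem_orthogonal {u : V} (huA : u ∈ A)
    (hu : u ∈ LinearMap.BilinForm.orthogonal ω A) (hu0 : u ≠ 0) :
    ∃ v ∉ A, ∃ v' ∉ LinearMap.range f, ∀ a : A, ω v' (f a) = ω v a := by
  obtain ⟨v, hv⟩ : ∃ v, ω v u ≠ 0 := by
    by_contra! h
    exact hu0 (hn.2 u h)
  obtain ⟨v', hv'⟩ := exists_forall_apply_eq_of_injective hn hf (ω v ∘ₗ A.subtype)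
  refine ⟨v, fun hvA => hv (hu v hvA), v', ?_, hv'⟩
  rintro ⟨a, rfl⟩
  -- `f u` is orthogonal to `range f`, yet `ω v' (f u) = ω v u ≠ 0`.
  exact hv ((hv' ⟨u, huA⟩).symm.trans ((hiso a ⟨u, huA⟩).trans (hu a a.2)))

theorem exists_extension_pair_of_disjoint_orthogonal (hr : ω.IsRefl) (hA : A ≠ ⊤)
    (hdisj : Disjoint A (LinearMap.BilinForm.orthogonal ω A)) :
    ∃ v ∉ A, ∃ v' ∉ LinearMap.range f, ∀ a : A, ω v' (f a) = ω v a := by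
  have hlt : finrank K A < finrank K V := Submodule.finrank_lt hA
  obtain ⟨v, hv, hv0⟩ := exists_ne_zero_mem_orthogonal hn hlt
  obtain ⟨v', hv', hv'0⟩ := exists_ne_zero_mem_orthogonal hn (A := LinearMap.range f)
    (by rwa [LinearMap.finrank_range_of_inj hf])
  refine ⟨v, fun hvA => hv0 (Submodule.disjoint_def.1 hdisj v hvA hv), v', ?_, fun a => ?_⟩
  · rintro ⟨a₀, rfl⟩
    have ha₀ : (a₀ : V) ∈ LinearMap.BilinForm.orthogonal ω A := fun a ha => by
      rw [← hiso ⟨a, ha⟩ a₀]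
      exact hv' _ (LinearMap.mem_range_self f _)
    have : a₀ = 0 := Subtype.ext (Submodule.disjoint_def.1 hdisj _ a₀.2 ha₀)
    exact hv'0 (by rw [this, map_zero])
  · rw [hr _ _ (hv' _ (LinearMap.mem_range_self f a)), hr _ _ (hv a a.2)]

theorem exists_extension_pair (hr : ω.IsRefl) (hA : A ≠ ⊤) :
    ∃ v ∉ A, ∃ v' ∉ LinearMap.range f, ∀ a : A, ω v' (f a) = ω v a := by
  by_cases hdisj : Disjoint A (LinearMap.BilinForm.orthogonal ω A)
  · exact exists_extension_pair_of_disjoint_orthogonal hn hf hiso hr hA hdisj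
  · rw [Submodule.disjoint_def] at hdisj
    push Not at hdisj
    obtain ⟨u, huA, hu, hu0⟩ := hdisj
    exact exists_extension_pair_of_mem_orthogonal hn hf hiso huA hu hu0

end ExtensionPair

theorem exists_linearEquiv_isometric_extending [FiniteDimensional K V] (hω : ω.IsAlt)
    (hn : ω.Nondegenerate) (f : V →ₗ.[K] V)
    (hf : Function.Injective f.toFun) (hiso : ∀ x y : f.domain, ω (f x) (f y) = ω x y) :
    ∃ Ψ : V ≃ₗ[K] V, (∀ x y, ω (Ψ x) (Ψ y) = ω x y) ∧ ∀ x : f.domain, Ψ x = f x := by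
  induction hk : finrank K V - finrank K f.domain using Nat.strong_induction_on generalizing f
    with | _ k ih =>
  by_cases hA : f.domain = ⊤
  · let e := (LinearEquiv.ofTop _ hA).symm
    have hg : Function.Injective (f.toFun ∘ₗ e.toLinearMap) := hf.comp e.injective
    refine ⟨LinearEquiv.ofInjectiveEndo _ hg, fun x y => ?_, fun x => ?_⟩
    · simp [e, hiso]
    · simp [e, LinearEquiv.ofTop_symm_apply]
  · obtain ⟨v, hv, v', hv', hvv'⟩ := exists_extension_pair hn hf hiso hω.isRefl hA
    have hlt : finrank K f.domain < finrank K (f.supSpanSingleton v v' hv).domain :=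
      Submodule.finrank_lt_finrank_of_lt (Submodule.lt_sup_iff_notMem.2 hv)
    obtain ⟨Ψ, hΨ, hΨf⟩ := ih _ (by have := (f.supSpanSingleton v v' hv).domain.finrank_le; omega)
      _ (LinearPMap.injective_supSpanSingleton hf hv hv')
      (isometric_supSpanSingleton hω hiso hv hvv') rfl
    refine ⟨Ψ, hΨ, fun x => ?_⟩
    rw [hΨf ⟨x, Submodule.mem_sup_left x.2⟩, LinearPMap.supSpanSingleton_apply_mk_of_mem]

end Witt

section Coisotropic

variable {V : Type*} [AddCommGroup V] [Module ℝ V] {ω : V →ₗ[ℝ] V →ₗ[ℝ] ℝ}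

theorem symplCompl_eq_orthogonal (hr : ω.IsRefl) (W : Submodule ℝ V) :
    symplCompl ω W = LinearMap.BilinForm.orthogonal ω W := by
  ext v
  exact ⟨fun h w hw => hr _ _ (h w hw), fun h w hw => hr _ _ (h w hw)⟩

variable [FiniteDimensional ℝ V] (hr : ω.IsRefl) (hn : ω.Nondegenerate) {W : Submodule ℝ V}
  (hW : symplCompl ω W ≤ W)
include hr hn hW

theorem finrank_comap_subtype_symplCompl :
    finrank ℝ ((symplCompl ω W).comap W.subtype) = finrank ℝ V - finrank ℝ W := by
  rw [(Submodule.comapSubtypeEquivOfLe hW).finrank_eq, symplCompl_eq_orthogonal hr,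
    LinearMap.BilinForm.finrank_orthogonal hn]

theorem finrank_quotient_symplCompl_add_finrank :
    finrank ℝ (W ⧸ (symplCompl ω W).comap W.subtype) + finrank ℝ V = 2 * finrank ℝ W := by
  have := Submodule.finrank_quotient_add_finrank ((symplCompl ω W).comap W.subtype)
  have := finrank_comap_subtype_symplCompl hr hn hW
  have := ((symplCompl ω W).comap W.subtype).finrank_le
  have := W.finrank_le
  omega

end Coisotropic

/-- Transitivity of the symplectic group action on the framed coisotropic Grassmannian:
given coisotropic subspaces `W₀, W` of a finite dimensional symplectic vector space
`(V, ω)` and a linear symplectic isomorphism `Φ` between the symplectic quotients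
`W₀/W₀^ω → W/W^ω`, there is a linear symplectic automorphism `Ψ` of `(V, ω)` with
`Ψ W₀ = W` inducing `Φ` on the quotients. -/
theorem stmt5 {V : Type*} [AddCommGroup V] [Module ℝ V] [FiniteDimensional ℝ V]
    (ω : V →ₗ[ℝ] V →ₗ[ℝ] ℝ)
    (halt : ∀ v : V, ω v v = 0)
    (hnondeg : ∀ v : V, (∀ w : V, ω v w = 0) → v = 0)
    (W₀ W : Submodule ℝ V)
    (hW₀ : symplCompl ω W₀ ≤ W₀) (hW : symplCompl ω W ≤ W)
    (Φ : (W₀ ⧸ (symplCompl ω W₀).comap W₀.subtype) ≃ₗ[ℝ]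
         (W ⧸ (symplCompl ω W).comap W.subtype))
    (hΦ : ∀ (x x' : W₀) (y y' : W),
      Φ (Submodule.Quotient.mk x) = Submodule.Quotient.mk y →
      Φ (Submodule.Quotient.mk x') = Submodule.Quotient.mk y' →
      ω (y : V) (y' : V) = ω (x : V) (x' : V)) :
    ∃ Ψ : V ≃ₗ[ℝ] V,
      (∀ x y : V, ω (Ψ x) (Ψ y) = ω x y) ∧
      Submodule.map (Ψ : V →ₗ[ℝ] V) W₀ = W ∧
      ∀ (x : W₀) (y : W), (y : V) = Ψ x →
        Φ (Submodule.Quotient.mk x) = Submodule.Quotient.mk y := by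
  have hr : ω.IsRefl := LinearMap.IsAlt.isRefl halt
  have hn : ω.Nondegenerate := hr.nondegenerate_iff_separatingLeft.2 hnondeg
  have hdim : finrank ℝ W₀ = finrank ℝ W := by
    have := Φ.finrank_eq
    have := finrank_quotient_symplCompl_add_finrank hr hn hW₀
    have := finrank_quotient_symplCompl_add_finrank hr hn hW
    omega
  obtain ⟨e, he⟩ := Submodule.exists_linearEquiv_mkQ_eq _ _ Φ (by
    rw [finrank_comap_subtype_symplCompl hr hn hW₀, finrank_comap_subtype_symplCompl hr hn hW,
      hdim])
  have hΦe (x : W₀) : Φ (Submodule.Quotient.mk x) = Submodule.Quotient.mk (e x) := (he x).symm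
  obtain ⟨Ψ, hΨ, hΨe⟩ := exists_linearEquiv_isometric_extending halt hn ⟨W₀, W.subtype ∘ₗ e⟩
    (W.injective_subtype.comp e.injective) (fun x y => hΦ x y _ _ (hΦe x) (hΦe y))
  refine ⟨Ψ, hΨ, ?_, fun x y hxy => ?_⟩
  · ext y
    constructor
    · rintro ⟨x, hx, rfl⟩
      exact (hΨe ⟨x, hx⟩).symm ▸ (e ⟨x, hx⟩).2
    · intro hy
      exact ⟨_, (e.symm ⟨y, hy⟩).2, (hΨe _).trans (by simp)⟩
  · rw [hΦe, show y = e x from Subtype.ext (hxy.trans (hΨe x))]
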